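/- arXiv:1510.08481 — 6 statements merged into one kernel-verified Lean document; each statement's English description precedes it below -/
import Mathlib

section
/- Every semi-magic square (an n×n matrix of non-negative integers all of whose rows sum to the same value s and all of whose columns sum to s) can be written as a sum of permutation matrices. -/
/-- The permutation matrix of `σ`: entry `(i,j)` is `1` if `j = σ i` and `0` otherwise. -/
def permMatrix' {n : ℕ} (σ : Equiv.Perm (Fin n)) : Matrix (Fin n) (Fin n) ℕ :=
  Matrix.of fun i j => if j = σ i then 1 else 0

/-!
Induction on the common line sum `s`. When `s > 0`, Hall's condition holds for the bipartite
graph of nonzero entries: the rows in a set `A` carry total mass `#A * s`, all of it inside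
the set `B` of columns meeting `A`, whose total mass is `#B * s`. A perfect matching gives a
permutation matrix below `M`; subtracting it leaves a semi-magic square with line sum `s - 1`.
-/

open Finset

variable {ι : Type*} [DecidableEq ι]

theorem exists_eq_add_permMatrix {M : Matrix ι ι ℕ} {σ : Equiv.Perm ι}
    (hσ : ∀ i, M i (σ i) ≠ 0) : ∃ N, M = N + σ.permMatrix ℕ := by
  refine ⟨M - σ.permMatrix ℕ, ?_⟩
  ext i j
  have := hσ i
  simp only [Matrix.add_apply, Matrix.sub_apply, PEquiv.toMatrix_apply, Equiv.toPEquiv_apply,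
    Option.mem_def, Option.some.injEq]
  split_ifs with h
  · subst h
    omega
  · omega

variable [Fintype ι]

theorem card_le_card_biUnion_support {M : Matrix ι ι ℕ} {s : ℕ} (hs : s ≠ 0)
    (hrow : ∀ i, ∑ j, M i j = s) (hcol : ∀ j, ∑ i, M i j = s) (A : Finset ι) :
    #A ≤ #(A.biUnion fun i => {j | M i j ≠ 0}) := by
  set B := A.biUnion fun i => {j | M i j ≠ 0}
  have row_supported : ∀ i ∈ A, ∑ j ∈ B, M i j = s := fun i hi => by
    rw [← hrow i]
    refine sum_subset (subset_univ B) fun j _ hj => ?_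
    by_contra h
    exact hj (mem_biUnion.2 ⟨i, hi, by simpa using h⟩)
  refine Nat.le_of_mul_le_mul_right ?_ (Nat.pos_of_ne_zero hs)
  calc #A * s = ∑ i ∈ A, ∑ j ∈ B, M i j := by
        rw [sum_congr rfl row_supported, sum_const, smul_eq_mul]
    _ ≤ ∑ i, ∑ j ∈ B, M i j := sum_le_sum_of_subset (subset_univ A)
    _ = #B * s := sum_comm.trans (by simp [hcol])

theorem exists_perm_forall_apply_ne_zero {M : Matrix ι ι ℕ} {s : ℕ} (hs : s ≠ 0)
    (hrow : ∀ i, ∑ j, M i j = s) (hcol : ∀ j, ∑ i, M i j = s) :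
    ∃ σ : Equiv.Perm ι, ∀ i, M i (σ i) ≠ 0 := by
  obtain ⟨g, hg, hgM⟩ := (all_card_le_biUnion_card_iff_exists_injective _).1
    (card_le_card_biUnion_support hs hrow hcol)
  exact ⟨Equiv.ofBijective g (Finite.injective_iff_bijective.1 hg), fun i => by simpa using hgM i⟩

theorem exists_list_sum_permMatrix_eq {M : Matrix ι ι ℕ} {s : ℕ}
    (hrow : ∀ i, ∑ j, M i j = s) (hcol : ∀ j, ∑ i, M i j = s) :
    ∃ l : List (Equiv.Perm ι), (l.map (·.permMatrix ℕ)).sum = M := by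
  induction s generalizing M with
  | zero => exact ⟨[], by ext i j; exact ((sum_eq_zero_iff.1 (hrow i)) j (mem_univ j)).symm⟩
  | succ s ih =>
    obtain ⟨σ, hσ⟩ := exists_perm_forall_apply_ne_zero s.succ_ne_zero hrow hcol
    obtain ⟨N, rfl⟩ := exists_eq_add_permMatrix hσ
    have hP : σ.permMatrix ℕ ∈ doublyStochastic ℕ ι := permMatrix_mem_doublyStochastic
    have hNrow : ∀ i, ∑ j, N i j = s := fun i => by
      have := hrow i
      simp only [Matrix.add_apply, sum_add_distrib, sum_row_of_mem_doublyStochastic hP] at this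
      omega
    have hNcol : ∀ j, ∑ i, N i j = s := fun j => by
      have := hcol j
      simp only [Matrix.add_apply, sum_add_distrib, sum_col_of_mem_doublyStochastic hP] at this
      omega
    obtain ⟨l, hl⟩ := ih hNrow hNcol
    exact ⟨σ :: l, by rw [List.map_cons, List.sum_cons, hl, add_comm]⟩

theorem permMatrix'_eq_permMatrix {n : ℕ} (σ : Equiv.Perm (Fin n)) :
    permMatrix' σ = σ.permMatrix ℕ := by
  ext i j
  simp [permMatrix', PEquiv.toMatrix_apply, Equiv.toPEquiv_apply, eq_comm]

/-- Every semi-magic square (an `n × n` matrix of non-negative integers all of whose rows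
sum to the same value `s` and all of whose columns sum to `s`) is a sum of permutation
matrices. -/
theorem semiMagic_eq_sum_permMatrices {n : ℕ} (M : Matrix (Fin n) (Fin n) ℕ) (s : ℕ)
    (hrow : ∀ i, ∑ j, M i j = s) (hcol : ∀ j, ∑ i, M i j = s) :
    ∃ l : List (Equiv.Perm (Fin n)), M = (l.map permMatrix').sum := by
  obtain ⟨l, hl⟩ := exists_list_sum_permMatrix_eq hrow hcol
  exact ⟨l, by rw [funext permMatrix'_eq_permMatrix, hl]⟩
end

section
/- The ring of polynomials in variables x_{i,j} (1 ≤ i,j ≤ n) over a field F that are invariant under the substitution x_{i,j} ↦ (λᵢ/μⱼ)·x_{i,j} for all λ, μ ∈ Fⁿ with ∏λᵢ = ∏μⱼ = 1 is generated as an F-algebra by the monomials Ψ⁰_σ := sign(σ)·∏_{i=1}^n x_{σ(i),i} for σ ranging over the symmetric group Sₙ. -/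
/-!
The substitution `x_{i,j} ↦ (λᵢ/μⱼ) x_{i,j}` multiplies the monomial `x^d` by
`∏ᵢ λᵢ^{rᵢ} / ∏ⱼ μⱼ^{cⱼ}`, where `rᵢ`, `cⱼ` are the row and column sums of the exponent matrix `d`.
Hence a polynomial is invariant iff each of its monomials is, and since `2` has infinite order
in a field of characteristic zero, `x^d` is invariant iff all row and column sums of `d` equal
one number `r`. By Birkhoff's theorem such a `d` is a sum of `r` permutation matrices, i.e. `x^d`
is a product of monomials `∏ᵢ x_{σ(i),i} = ± Ψ⁰_σ`. Conversely each `Ψ⁰_σ` is invariant because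
its exponent matrix has all line sums `1`.
-/

open MvPolynomial

/-- The canonical generator `Ψ⁰_σ = sign σ · ∏ᵢ x_{σ(i), i}`. -/
noncomputable def Psi0 {F : Type*} [Field F] {n : ℕ} (σ : Equiv.Perm (Fin n)) :
    MvPolynomial (Fin n × Fin n) F :=
  C ((Equiv.Perm.sign σ : ℤ) : F) * ∏ i, X (σ i, i)

namespace MvPolynomial

variable {R σ : Type*} [CommSemiring R] (s : σ → R)

theorem aeval_C_mul_X_monomial (e : σ →₀ ℕ) (a : R) :
    aeval (fun q => C (s q) * X q) (monomial e a) =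
      monomial e ((e.prod fun q k => s q ^ k) * a) := by
  rw [aeval_monomial, monomial_eq, algebraMap_eq, C_mul]
  simp only [mul_pow, Finsupp.prod_mul, ← map_pow, ← map_finsuppProd]
  ring

theorem coeff_aeval_C_mul_X (P : MvPolynomial σ R) (d : σ →₀ ℕ) :
    coeff d (aeval (fun q => C (s q) * X q) P) =
      (d.prod fun q k => s q ^ k) * coeff d P := by
  classical
  induction P using MvPolynomial.induction_on' with
  | monomial e a =>
    rw [aeval_C_mul_X_monomial, coeff_monomial, coeff_monomial]
    split_ifs with h <;> simp [h]
  | add p q hp hq => simp only [map_add, coeff_add, hp, hq, mul_add]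

theorem aeval_C_mul_X_eq_self_iff [IsDomain R] (P : MvPolynomial σ R) :
    aeval (fun q => C (s q) * X q) P = P ↔
      ∀ d ∈ P.support, (d.prod fun q k => s q ^ k) = 1 := by
  simp only [MvPolynomial.ext_iff, coeff_aeval_C_mul_X, mem_support_iff, mul_left_eq_self₀]
  exact forall_congr' fun d => or_iff_not_imp_right

end MvPolynomial

theorem eq_of_forall_prod_pow_eq_one {F ι : Type*} [Field F] [CharZero F] [Fintype ι]
    (g : ι → ℕ) (h : ∀ f : ι → F, (∀ i, f i ≠ 0) → ∏ i, f i = 1 → ∏ i, f i ^ g i = 1)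
    (i j : ι) : g i = g j := by
  classical
  have prod_mulSingle_pow (k : ι) (x : F) : ∏ l, Pi.mulSingle k x l ^ g l = x ^ g k := by
    simp_rw [Pi.apply_mulSingle (fun l (y : F) => y ^ g l) (fun _ => one_pow _)]
    exact Fintype.prod_pi_mulSingle' k _
  have hf := h (Pi.mulSingle i 2 * Pi.mulSingle j 2⁻¹)
    (fun l => by simp only [Pi.mul_apply, Pi.mulSingle_apply]; split_ifs <;> norm_num)
    (by simp [Finset.prod_mul_distrib])
  simp only [Pi.mul_apply, mul_pow, Finset.prod_mul_distrib, prod_mulSingle_pow, inv_pow]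
    at hf
  have h2 : (2 : F) ^ g i = 2 ^ g j := (mul_inv_eq_one₀ (pow_ne_zero _ two_ne_zero)).mp hf
  exact Nat.pow_right_injective le_rfl (by exact_mod_cast h2)

section LineSums

variable {ι κ : Type*}

def rowSum [Fintype κ] (d : ι × κ →₀ ℕ) (i : ι) : ℕ := ∑ j, d (i, j)

def colSum [Fintype ι] (d : ι × κ →₀ ℕ) (j : κ) : ℕ := ∑ i, d (i, j)

theorem sum_rowSum [Fintype ι] [Fintype κ] (d : ι × κ →₀ ℕ) :
    ∑ i, rowSum d i = ∑ j, colSum d j :=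
  Finset.sum_comm

theorem rowSum_tsub [Fintype κ] {d e : ι × κ →₀ ℕ} (h : e ≤ d) (i : ι) :
    rowSum (d - e) i = rowSum d i - rowSum e i :=
  Finset.sum_tsub_distrib _ fun j _ => h (i, j)

theorem colSum_tsub [Fintype ι] {d e : ι × κ →₀ ℕ} (h : e ≤ d) (j : κ) :
    colSum (d - e) j = colSum d j - colSum e j :=
  Finset.sum_tsub_distrib _ fun i _ => h (i, j)

theorem prod_div_pow_eq_rowSum_colSum [Fintype ι] [Fintype κ] {F : Type*} [Field F]
    (lam : ι → F) (mu : κ → F) (d : ι × κ →₀ ℕ) :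
    (d.prod fun q k => (lam q.1 / mu q.2) ^ k) =
      (∏ i, lam i ^ rowSum d i) / ∏ j, mu j ^ colSum d j := by
  rw [Finsupp.prod_fintype _ _ fun _ => pow_zero _]
  simp only [div_pow, Finset.prod_div_distrib, Fintype.prod_prod_type, rowSum, colSum,
    Finset.prod_pow_eq_pow_sum]
  rw [Finset.prod_comm]
  simp only [Finset.prod_pow_eq_pow_sum]

theorem exists_rowSum_eq_colSum_eq [Fintype ι] {F : Type*} [Field F] [CharZero F]
    (d : ι × ι →₀ ℕ)
    (h : ∀ lam mu : ι → F, (∀ i, lam i ≠ 0) → (∀ j, mu j ≠ 0) → ∏ i, lam i = 1 →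
      ∏ j, mu j = 1 → (∏ i, lam i ^ rowSum d i) / ∏ j, mu j ^ colSum d j = 1) :
    ∃ r, (∀ i, rowSum d i = r) ∧ ∀ j, colSum d j = r := by
  have hrow : ∀ i i', rowSum d i = rowSum d i' :=
    eq_of_forall_prod_pow_eq_one (F := F) _ fun f hf hf1 => by
      simpa using h f 1 hf (fun _ => one_ne_zero) hf1 (by simp)
  have hcol : ∀ j j', colSum d j = colSum d j' :=
    eq_of_forall_prod_pow_eq_one (F := F) _ fun f hf hf1 => by
      simpa using h 1 f (fun _ => one_ne_zero) hf (by simp) hf1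
  rcases isEmpty_or_nonempty ι with _ | ⟨⟨i₀⟩⟩
  · exact ⟨0, isEmptyElim, isEmptyElim⟩
  refine ⟨rowSum d i₀, fun i => hrow i i₀, fun j =>
    Nat.eq_of_mul_eq_mul_left (Fintype.card_pos_iff.mpr ⟨i₀⟩) ?_⟩
  calc Fintype.card ι * colSum d j = ∑ j', colSum d j' := by simp [hcol _ j]
    _ = ∑ i, rowSum d i := (sum_rowSum d).symm
    _ = Fintype.card ι * rowSum d i₀ := by simp [hrow _ i₀]

end LineSums

section Birkhoff

variable {ι : Type*} [Fintype ι]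

noncomputable def permExponent (σ : Equiv.Perm ι) : ι × ι →₀ ℕ :=
  ∑ j, Finsupp.single (σ j, j) 1

theorem permExponent_apply [DecidableEq ι] (σ : Equiv.Perm ι) (i j : ι) :
    permExponent σ (i, j) = if i = σ j then 1 else 0 := by
  simp only [permExponent, Finsupp.finsetSum_apply, Finsupp.single_apply, Prod.ext_iff,
    and_comm (a := σ _ = i), ite_and]
  simp [eq_comm]

theorem rowSum_permExponent (σ : Equiv.Perm ι) (i : ι) : rowSum (permExponent σ) i = 1 := by
  classical
  simp [rowSum, permExponent_apply, ← σ.symm_apply_eq]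

theorem colSum_permExponent (σ : Equiv.Perm ι) (j : ι) : colSum (permExponent σ) j = 1 := by
  classical
  simp [colSum, permExponent_apply]

/-- `d / r` is doubly stochastic, so by Birkhoff's theorem some permutation matrix occurs with
positive weight in it, and its support lies in that of `d`. -/
theorem exists_permExponent_le {r : ℕ} (hr0 : 0 < r) (d : ι × ι →₀ ℕ)
    (hr : ∀ i, rowSum d i = r) (hc : ∀ j, colSum d j = r) :
    ∃ σ : Equiv.Perm ι, permExponent σ ≤ d := by
  classical
  obtain ⟨M, hM, hdM⟩ := (exists_mem_doublyStochastic_eq_smul_iff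
    (M := fun i j => (d (i, j) : ℚ)) (Nat.cast_nonneg r)).mpr
    ⟨fun i j => Nat.cast_nonneg (α := ℚ) (d (i, j)),
      fun i => by exact_mod_cast hr i, fun j => by exact_mod_cast hc j⟩
  obtain ⟨w, hw0, hw1, hwM⟩ := exists_eq_sum_perm_of_mem_doublyStochastic hM
  obtain ⟨σ, -, hσ⟩ := Finset.exists_ne_zero_of_sum_ne_zero (hw1 ▸ one_ne_zero)
  refine ⟨σ.symm, fun ⟨i, j⟩ => ?_⟩
  rw [permExponent_apply]
  split_ifs with hij
  · subst hij
    have hM_pos : 0 < M (σ.symm j) j := by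
      calc 0 < w σ * σ.permMatrix ℚ (σ.symm j) j := by
            simpa [Equiv.toPEquiv_apply] using (hw0 σ).lt_of_ne' hσ
        _ ≤ ∑ τ, w τ * τ.permMatrix ℚ (σ.symm j) j :=
            Finset.single_le_sum (fun τ _ => mul_nonneg (hw0 τ)
              (nonneg_of_mem_doublyStochastic permMatrix_mem_doublyStochastic))
              (Finset.mem_univ σ)
        _ = M (σ.symm j) j := by rw [← hwM]; simp [Matrix.sum_apply]
    have hd := congrFun (congrFun hdM (σ.symm j)) j
    simp only [Matrix.smul_apply, smul_eq_mul] at hd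
    exact_mod_cast hd ▸ mul_pos (Nat.cast_pos.mpr hr0) hM_pos
  · exact Nat.zero_le _

theorem mem_closure_permExponent (r : ℕ) (d : ι × ι →₀ ℕ)
    (hr : ∀ i, rowSum d i = r) (hc : ∀ j, colSum d j = r) :
    d ∈ AddSubmonoid.closure (Set.range (permExponent (ι := ι))) := by
  induction r generalizing d with
  | zero =>
    have hd : d = 0 := by
      ext ⟨i, j⟩
      exact Finset.sum_eq_zero_iff.mp (hr i) j (Finset.mem_univ j)
    exact hd ▸ zero_mem _
  | succ r ih =>
    obtain ⟨σ, hσ⟩ := exists_permExponent_le r.succ_pos d hr hc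
    rw [← tsub_add_cancel_of_le hσ]
    refine add_mem (ih _ (fun i => ?_) (fun j => ?_)) (AddSubmonoid.subset_closure ⟨σ, rfl⟩)
    · rw [rowSum_tsub hσ, hr, rowSum_permExponent, Nat.add_sub_cancel]
    · rw [colSum_tsub hσ, hc, colSum_permExponent, Nat.add_sub_cancel]

theorem prod_X_eq_monomial_permExponent {R : Type*} [CommSemiring R] (σ : Equiv.Perm ι) :
    ∏ i, X (σ i, i) = (monomial (permExponent σ) 1 : MvPolynomial (ι × ι) R) := by
  rw [permExponent, monomial_sum_one]
  rfl

end Birkhoff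

section Psi0

variable {F : Type*} [Field F] {n : ℕ}

theorem Psi0_eq_monomial (σ : Equiv.Perm (Fin n)) :
    Psi0 (F := F) σ = monomial (permExponent σ) ((Equiv.Perm.sign σ : ℤ) : F) := by
  rw [Psi0, prod_X_eq_monomial_permExponent, C_mul_monomial, mul_one]

theorem aeval_C_div_mul_X_Psi0 (σ : Equiv.Perm (Fin n)) {lam mu : Fin n → F}
    (hlam : ∏ i, lam i = 1) (hmu : ∏ j, mu j = 1) :
    aeval (fun q : Fin n × Fin n => C (lam q.1 / mu q.2) * X q) (Psi0 (F := F) σ) = Psi0 σ := by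
  refine (aeval_C_mul_X_eq_self_iff _ _).mpr fun d hd => ?_
  rw [Psi0_eq_monomial] at hd
  obtain rfl := Finset.mem_singleton.mp (support_monomial_subset hd)
  rw [prod_div_pow_eq_rowSum_colSum]
  simp [rowSum_permExponent, colSum_permExponent, hlam, hmu]

theorem monomial_permExponent_mem_adjoin_Psi0 (σ : Equiv.Perm (Fin n)) :
    monomial (permExponent σ) (1 : F) ∈
      Algebra.adjoin F (Set.range (Psi0 (F := F) (n := n))) := by
  have hsign : ((Equiv.Perm.sign σ : ℤ) : F) * ((Equiv.Perm.sign σ : ℤ) : F) = 1 := by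
    rw [← Int.cast_mul, ← Units.val_mul, Int.units_mul_self, Units.val_one, Int.cast_one]
  have h : monomial (permExponent σ) (1 : F) = ((Equiv.Perm.sign σ : ℤ) : F) • Psi0 σ := by
    rw [Psi0_eq_monomial, smul_monomial, smul_eq_mul, hsign]
  exact h ▸ Subalgebra.smul_mem _ (Algebra.subset_adjoin (Set.mem_range_self σ)) _

theorem monomial_mem_adjoin_Psi0 {d : Fin n × Fin n →₀ ℕ}
    (hd : d ∈ AddSubmonoid.closure (Set.range (permExponent (ι := Fin n)))) :
    monomial d (1 : F) ∈ Algebra.adjoin F (Set.range (Psi0 (F := F) (n := n))) := by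
  induction hd using AddSubmonoid.closure_induction with
  | mem _ h =>
    obtain ⟨σ, rfl⟩ := h
    exact monomial_permExponent_mem_adjoin_Psi0 σ
  | zero => exact one_mem _
  | add d e _ _ hd he =>
    rw [← mul_one (1 : F), ← monomial_mul]
    exact mul_mem hd he

end Psi0

/-- A polynomial in the variables `x_{i,j}` over a field `F` of characteristic zero is
invariant under all substitutions `x_{i,j} ↦ (λᵢ/μⱼ)·x_{i,j}` with `∏λᵢ = ∏μⱼ = 1` if and
only if it lies in the `F`-subalgebra generated by the monomials
`Ψ⁰_σ = sign σ · ∏ᵢ x_{σ(i),i}`, `σ ∈ Sₙ`. -/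
theorem invariant_iff_mem_adjoin_Psi0 {F : Type*} [Field F] [CharZero F] {n : ℕ}
    (P : MvPolynomial (Fin n × Fin n) F) :
    (∀ lam mu : Fin n → F, (∀ i, lam i ≠ 0) → (∀ j, mu j ≠ 0) →
        ∏ i, lam i = 1 → ∏ j, mu j = 1 →
        aeval (fun q : Fin n × Fin n => C (lam q.1 / mu q.2) * X q) P = P)
      ↔ P ∈ Algebra.adjoin F (Set.range (Psi0 (F := F) (n := n))) := by
  constructor
  · intro h
    rw [P.as_sum]
    refine Subalgebra.sum_mem _ fun d hd => ?_
    obtain ⟨r, hr, hc⟩ := exists_rowSum_eq_colSum_eq (F := F) d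
      fun lam mu hlam hmu h1 h2 => by
        rw [← prod_div_pow_eq_rowSum_colSum]
        exact (aeval_C_mul_X_eq_self_iff _ P).mp (h lam mu hlam hmu h1 h2) d hd
    rw [← mul_one (coeff d P), ← smul_eq_mul, ← smul_monomial]
    exact Subalgebra.smul_mem _ (monomial_mem_adjoin_Psi0 (mem_closure_permExponent r d hr hc)) _
  · intro hP lam mu _ _ hlam hmu
    exact AlgHom.adjoin_le_equalizer _ (AlgHom.id F _)
      (Set.forall_mem_range.mpr fun σ => aeval_C_div_mul_X_Psi0 σ hlam hmu) hP
end

section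
/- Let E be an étale algebra of degree n over a field L where E splits (E ≅ Lⁿ), with complete set of primitive orthogonal idempotents e₁,…,eₙ. Let b₁,…,bₙ be an L-basis of E and let b̌₁,…,b̌ₙ be its dual basis with respect to the trace form (Tr(b̌ᵢ bⱼ) = δ_{ij}). Then for any σ ∈ Sₙ (acting by permuting the idempotents) and any g in the ambient split central simple algebra, Nrd(Σᵢ (σ·b̌ᵢ)·g·bᵢ) = Nrd(Σᵢ (σ·eᵢ)·g·eᵢ), i.e., the canonical generator Ψ_σ can be computed using any basis and its dual basis. -/
open Matrix

/-!
The `(a, b)` entry of `∑ᵢ diagonal (xᵢ) * g * diagonal (yᵢ)` is `(∑ᵢ xᵢ a * yᵢ b) * g a b`.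
For a pair of dual bases, `∑ᵢ vdualᵢ a * vᵢ b = δ_{ab}`: the duality relation says that a square
matrix has a one-sided inverse, which is then two-sided (this is the Trd-adjoint step). So the sum
is the matrix `[σ b = a] * g a b` for every dual pair, in particular for the idempotents, which are
their own dual basis.
-/

namespace Matrix

theorem sum_diagonal_mul_mul_diagonal_apply {ι n α : Type*} [Fintype ι] [Fintype n]
    [DecidableEq n] [CommSemiring α] (x y : ι → n → α) (g : Matrix n n α) (a b : n) :
    (∑ i, diagonal (x i) * g * diagonal (y i)) a b = (∑ i, x i a * y i b) * g a b := by
  simp only [sum_apply, mul_diagonal, diagonal_mul, Finset.sum_mul]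
  exact Finset.sum_congr rfl fun i _ => by ring

theorem sum_mul_eq_ite_of_dual {n R : Type*} [Fintype n] [DecidableEq n] [CommRing R]
    {v w : n → n → R} (hdual : ∀ i j, ∑ k, w i k * v j k = if i = j then 1 else 0) (a b : n) :
    ∑ i, w i a * v i b = if a = b then 1 else 0 := by
  have hright : of w * (of v)ᵀ = 1 := by
    ext i j
    simpa [mul_apply, one_apply] using hdual i j
  have hleft : (of v)ᵀ * of w = 1 := mul_eq_one_comm.mp hright
  simpa [mul_apply, one_apply, mul_comm, eq_comm] using congrFun (congrFun hleft b) a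

theorem sum_diagonal_perm_mul_mul_diagonal_of_dual {n R : Type*} [Fintype n] [DecidableEq n]
    [CommRing R] {v w : n → n → R}
    (hdual : ∀ i j, ∑ k, w i k * v j k = if i = j then 1 else 0)
    (g : Matrix n n R) (σ : Equiv.Perm n) :
    ∑ i, diagonal (fun k => w i (σ⁻¹ k)) * g * diagonal (v i)
      = of fun a b => if σ b = a then g a b else 0 := by
  ext a b
  rw [sum_diagonal_mul_mul_diagonal_apply, sum_mul_eq_ite_of_dual hdual, of_apply, ite_mul,
    one_mul, zero_mul]
  exact if_congr (Equiv.Perm.inv_eq_iff_eq.trans eq_comm) rfl rfl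

end Matrix

/-- In the split model `B = Mₙ(L)` with `E` the diagonal étale subalgebra, whose complete
set of primitive orthogonal idempotents is `eᵢ = E_{ii}` (orthonormal for the reduced
trace form), suppose `b i = diagonal (v i)` is an `L`-basis of `E` and
`b̌ i = diagonal (vdual i)` is its dual basis for the trace form, i.e.
`Trd(b̌ᵢ bⱼ) = Σₖ vdual i k · v j k = δᵢⱼ`.  A Weyl group element `σ ∈ Sₙ` acts on `E` by
permuting the idempotents, `σ·diagonal w = diagonal (w ∘ σ⁻¹)`.  Then for every `g`,
`Nrd(Σᵢ (σ·b̌ᵢ)·g·bᵢ) = Nrd(Σᵢ (σ·eᵢ)·g·eᵢ)`: the canonical generator `Ψ_σ` can be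
computed using any basis and its dual basis. -/
theorem canonical_generator_via_dual_basis {L : Type*} [Field L] {n : ℕ}
    (v vdual : Fin n → Fin n → L)
    (hdual : ∀ i j, ∑ k, vdual i k * v j k = if i = j then (1 : L) else 0)
    (g : Matrix (Fin n) (Fin n) L) (σ : Equiv.Perm (Fin n)) :
    (∑ i, Matrix.diagonal (fun k => vdual i (σ⁻¹ k)) * g * Matrix.diagonal (v i)).det
      = (∑ i, Matrix.single (σ i) (σ i) (1 : L) * g
          * Matrix.single i i (1 : L)).det := by
  let e : Fin n → Fin n → L := fun i => Pi.single i 1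
  have he : ∀ i j, ∑ k, e i k * e j k = if i = j then 1 else 0 := by
    intro i j
    simp only [e, Pi.single_apply, mul_ite, mul_one, mul_zero, Finset.sum_ite_eq',
      Finset.mem_univ, if_true]
    exact if_congr eq_comm rfl rfl
  have hσ : ∀ i, Matrix.single (σ i) (σ i) (1 : L) = diagonal (fun k => e i (σ⁻¹ k)) := by
    intro i
    rw [← diagonal_single]
    congr 1
    ext k
    simp only [e, Pi.single_apply, Equiv.Perm.inv_eq_iff_eq]
  have hi : ∀ i, Matrix.single i i (1 : L) = diagonal (e i) := fun i => (diagonal_single i 1).symm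
  simp only [hσ, hi, sum_diagonal_perm_mul_mul_diagonal_of_dual hdual,
    sum_diagonal_perm_mul_mul_diagonal_of_dual he]
end

section
/- Assume Gal(L/F) is 2-transitive as a subgroup of the Weyl group W ≅ Sₙ. If g ∈ G(F) and there exists a fixed-point-free σ ∈ W with Ψ_σ(g) = 0, then Ψ_τ(g) = 0 for every τ ≠ id and Ψ_id(g) = 1; consequently the image of g in the double quotient T\\G/T equals the image of the identity. -/
/-!
Under `φ : L ⊗_F B ≃ Mₙ(L)` the sandwich `∑ᵢ e_{π i} x eᵢ` becomes the matrix keeping only the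
entries `M (π i) i` of `M = φ x`, so `Ψ_π(x) = sign π · ∏ᵢ M (π i) i / det M`. Hence `Ψ_σ(g) = 0`
says that some off-diagonal entry `M (σ i) i` of `M = φ (1 ⊗ g)` vanishes. The Galois group fixes
`1 ⊗ g` and permutes the `eᵢ` through `η`, so the zero pattern of `M` is `η`-invariant, and
2-transitivity makes every off-diagonal entry vanish. For a diagonal `M` with `det M ≠ 0` one has
`Ψ_π = [π = 1]`, exactly as at the identity.
-/

open scoped TensorProduct
open Equiv Matrix

namespace Matrix

variable {ι R : Type*} [CommRing R]

theorem single_eq_zero_iff {m n α : Type*} [DecidableEq m] [DecidableEq n] [Zero α] {a : m}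
    {b : n} {c : α} : single a b c = 0 ↔ c = 0 :=
  ⟨fun h => by simpa using congrArg (· a b) h, fun h => by rw [h, single_zero]⟩

theorem sum_single_perm_eq_submatrix_diagonal [Fintype ι] [DecidableEq ι] (π : Perm ι)
    (f : ι → R) : ∑ i, single (π i) i (f i) = (diagonal f).submatrix π.symm id := by
  ext a b
  obtain ⟨a, rfl⟩ := π.surjective a
  simp [Matrix.sum_apply, single_apply, diagonal_apply, ite_and]

theorem det_sum_single_perm [Fintype ι] [DecidableEq ι] (π : Perm ι) (f : ι → R) :
    (∑ i, single (π i) i (f i)).det = Perm.sign π * ∏ i, f i := by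
  rw [sum_single_perm_eq_submatrix_diagonal, det_permute, det_diagonal, Perm.sign_symm]

theorem IsDiag.det_eq_prod_diag [Fintype ι] [DecidableEq ι] {M : Matrix ι ι R}
    (hM : M.IsDiag) : M.det = ∏ i, M i i :=
  (congrArg det hM.diagonal_diag).symm.trans det_diagonal

theorem IsDiag.prod_perm_eq_zero [Fintype ι] {M : Matrix ι ι R} (hM : M.IsDiag) {π : Perm ι}
    (hπ : π ≠ 1) : ∏ i, M (π i) i = 0 := by
  obtain ⟨j, hj⟩ : ∃ j, π j ≠ j := by simpa [Equiv.ext_iff] using hπ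
  exact Finset.prod_eq_zero (Finset.mem_univ j) (hM hj)

theorem isDiag_of_entry_eq_zero_of_twoTransitive {κ : Type*} {M : Matrix ι ι R}
    (p : κ → Perm ι) (hp : ∀ k a b, M a b = 0 → M (p k a) (p k b) = 0)
    (h2 : ∀ a b c d, a ≠ b → c ≠ d → ∃ k, p k a = c ∧ p k b = d)
    {a b : ι} (hab : a ≠ b) (h : M a b = 0) : M.IsDiag := by
  intro c d hcd
  obtain ⟨k, rfl, rfl⟩ := h2 a b c d hab hcd
  exact hp k a b h

end Matrix

section SplitModel

variable {ι L A : Type*} [Fintype ι] [DecidableEq ι] [CommRing L] [Ring A] [Algebra L A]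
  (φ : A ≃ₐ[L] Matrix ι ι L) {e : ι → A}

theorem map_idempotent_mul_mul_idempotent (he : ∀ i, φ (e i) = single i i 1) (x : A) (a b : ι) :
    φ (e a * x * e b) = single a b (φ x a b) := by
  rw [map_mul, map_mul, he, he, single_mul_mul_single, one_mul, mul_one]

theorem idempotent_mul_mul_idempotent_eq_zero_iff (he : ∀ i, φ (e i) = single i i 1) (x : A)
    (a b : ι) : e a * x * e b = 0 ↔ φ x a b = 0 := by
  rw [← φ.injective.eq_iff, map_idempotent_mul_mul_idempotent φ he, map_zero, single_eq_zero_iff]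

theorem det_map_sum_idempotent_mul_mul_idempotent (he : ∀ i, φ (e i) = single i i 1)
    (π : Perm ι) (x : A) :
    (φ (∑ i, e (π i) * x * e i)).det = Perm.sign π * ∏ i, φ x (π i) i := by
  simp only [map_sum, map_idempotent_mul_mul_idempotent φ he, det_sum_single_perm]

theorem entry_eq_zero_of_map_idempotent {G : Type*} [FunLike G A A]
    [MonoidWithZeroHomClass G A A] (he : ∀ i, φ (e i) = single i i 1) (f : G) {p : Perm ι}
    (hf : ∀ i, f (e i) = e (p i)) {x : A} (hx : f x = x) {a b : ι}
    (h : φ x a b = 0) : φ x (p a) (p b) = 0 := by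
  rw [← idempotent_mul_mul_idempotent_eq_zero_iff φ he] at h ⊢
  simpa only [map_mul, hf, hx, map_zero] using congrArg f h

end SplitModel

section CanonicalGenerator

variable {ι L A : Type*} [Fintype ι] [DecidableEq ι] [Field L] [Ring A] [Algebra L A]
  (φ : A ≃ₐ[L] Matrix ι ι L) {e : ι → A}

/-- `Ψ_π(x) = Nrd(∑ᵢ e_{π i} x eᵢ) / Nrd(x)`, with `Nrd = det ∘ φ`. -/
noncomputable def canonicalGenerator (e : ι → A) (π : Perm ι) (x : A) : L :=
  (φ (∑ i, e (π i) * x * e i)).det * ((φ x).det)⁻¹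

theorem exists_entry_eq_zero_of_canonicalGenerator_eq_zero (he : ∀ i, φ (e i) = single i i 1)
    {π : Perm ι} {x : A} (hx : (φ x).det ≠ 0) (h : canonicalGenerator φ e π x = 0) :
    ∃ i, φ x (π i) i = 0 := by
  rw [canonicalGenerator, mul_eq_zero, det_map_sum_idempotent_mul_mul_idempotent φ he,
    mul_eq_zero, Finset.prod_eq_zero_iff] at h
  have hsign : ((Perm.sign π : ℤ) : L) ≠ 0 :=
    ((Perm.sign π).isUnit.map (Int.castRingHom L)).ne_zero
  obtain (hsign' | ⟨i, -, hi⟩) | hinv := h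
  · exact absurd hsign' hsign
  · exact ⟨i, hi⟩
  · exact absurd hinv (inv_ne_zero hx)

theorem canonicalGenerator_eq_ite_of_isDiag (he : ∀ i, φ (e i) = single i i 1) {x : A}
    (hdiag : (φ x).IsDiag) (hx : (φ x).det ≠ 0) (π : Perm ι) :
    canonicalGenerator φ e π x = if π = 1 then 1 else 0 := by
  rw [canonicalGenerator, det_map_sum_idempotent_mul_mul_idempotent φ he]
  split_ifs with hπ
  · subst hπ
    simp only [Perm.sign_one, Units.val_one, Int.cast_one, one_mul, Perm.one_apply]
    rw [← hdiag.det_eq_prod_diag, mul_inv_cancel₀ hx]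
  · rw [hdiag.prod_perm_eq_zero hπ, mul_zero, zero_mul]

end CanonicalGenerator

theorem canonical_generators_trivial_of_two_transitive_general {F L B : Type*} [Field F] [Field L]
    [Algebra F L] [Ring B] [Algebra F B] {n : ℕ}
    (e : Fin n → L ⊗[F] B)
    (φ : (L ⊗[F] B) ≃ₐ[L] Matrix (Fin n) (Fin n) L)
    (he : ∀ i, φ (e i) = Matrix.single i i (1 : L))
    (η : (L ≃ₐ[F] L) →* Equiv.Perm (Fin n))
    (hequiv : ∀ (τ : L ≃ₐ[F] L) (i : Fin n),
      Algebra.TensorProduct.map τ.toAlgHom (AlgHom.id F B) (e i) = e (η τ i))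
    (h2trans : ∀ a b c d : Fin n, a ≠ b → c ≠ d → ∃ τ : L ≃ₐ[F] L, η τ a = c ∧ η τ b = d)
    (g : B) (hg : (φ ((1 : L) ⊗ₜ[F] g)).det ≠ 0)
    (σ : Equiv.Perm (Fin n)) (hσfix : ∀ i, σ i ≠ i)
    (hzero : (φ (∑ i, e (σ i) * ((1 : L) ⊗ₜ[F] g) * e i)).det
        * ((φ ((1 : L) ⊗ₜ[F] g)).det)⁻¹ = 0) :
    (∀ τ : Equiv.Perm (Fin n), τ ≠ 1 →
      (φ (∑ i, e (τ i) * ((1 : L) ⊗ₜ[F] g) * e i)).det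
        * ((φ ((1 : L) ⊗ₜ[F] g)).det)⁻¹ = 0) ∧
    (φ (∑ i, e i * ((1 : L) ⊗ₜ[F] g) * e i)).det * ((φ ((1 : L) ⊗ₜ[F] g)).det)⁻¹ = 1 ∧
    (∀ τ : Equiv.Perm (Fin n),
      (φ (∑ i, e (τ i) * ((1 : L) ⊗ₜ[F] g) * e i)).det * ((φ ((1 : L) ⊗ₜ[F] g)).det)⁻¹
        = (φ (∑ i, e (τ i) * (1 : L ⊗[F] B) * e i)).det
            * ((φ (1 : L ⊗[F] B)).det)⁻¹) := by
  obtain ⟨i, hi⟩ := exists_entry_eq_zero_of_canonicalGenerator_eq_zero φ he hg hzero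
  have hgalois : ∀ τ a b, φ ((1 : L) ⊗ₜ[F] g) a b = 0 →
      φ ((1 : L) ⊗ₜ[F] g) (η τ a) (η τ b) = 0 := fun τ _ _ =>
    entry_eq_zero_of_map_idempotent φ he (Algebra.TensorProduct.map τ.toAlgHom (AlgHom.id F B))
      (hequiv τ) (by simp)
  have hdiag : (φ ((1 : L) ⊗ₜ[F] g)).IsDiag :=
    isDiag_of_entry_eq_zero_of_twoTransitive η hgalois h2trans (hσfix i) hi
  have hΨg := canonicalGenerator_eq_ite_of_isDiag φ he hdiag hg
  have hΨ1 := canonicalGenerator_eq_ite_of_isDiag φ he (x := 1) (by simp) (by simp)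
  exact ⟨fun τ hτ => (hΨg τ).trans (if_neg hτ), (hΨg 1).trans (if_pos rfl),
    fun τ => (hΨg τ).trans (hΨ1 τ).symm⟩

/-- Assume `Gal(L/F)` is 2-transitive as a subgroup (via the injection `η`) of the Weyl
group `W ≅ Sₙ`.  Work in the split model: `φ : L ⊗_F B ≃ Mₙ(L)` carries the idempotents
`eᵢ` of the split maximal commutative subalgebra associated to `T` to the standard
diagonal idempotents, the Galois action permutes the `eᵢ` via `η`, and the reduced norm
`Nrd = det ∘ φ` is Galois equivariant.  If `g ∈ G(F)` and there is a fixed-point-free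
`σ ∈ W` with `Ψ_σ(g) = 0`, then `Ψ_τ(g) = 0` for every `τ ≠ id` and `Ψ_id(g) = 1`;
consequently all the canonical generators take the same value at `g` as at the identity,
i.e. the image of `g` in the double quotient `T\G/T` equals the image of the identity. -/
theorem canonical_generators_trivial_of_two_transitive {F L B : Type*} [Field F] [Field L]
    [Algebra F L] [Ring B] [Algebra F B] {n : ℕ}
    (e : Fin n → L ⊗[F] B)
    (φ : (L ⊗[F] B) ≃ₐ[L] Matrix (Fin n) (Fin n) L)
    (he : ∀ i, φ (e i) = Matrix.single i i (1 : L))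
    (η : (L ≃ₐ[F] L) →* Equiv.Perm (Fin n))
    (hequiv : ∀ (τ : L ≃ₐ[F] L) (i : Fin n),
      Algebra.TensorProduct.map τ.toAlgHom (AlgHom.id F B) (e i) = e (η τ i))
    (hNrdGal : ∀ (τ : L ≃ₐ[F] L) (x : L ⊗[F] B),
      (φ (Algebra.TensorProduct.map τ.toAlgHom (AlgHom.id F B) x)).det = τ ((φ x).det))
    (h2trans : ∀ a b c d : Fin n, a ≠ b → c ≠ d → ∃ τ : L ≃ₐ[F] L, η τ a = c ∧ η τ b = d)
    (g : B) (hg : (φ ((1 : L) ⊗ₜ[F] g)).det ≠ 0)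
    (σ : Equiv.Perm (Fin n)) (hσfix : ∀ i, σ i ≠ i)
    (hzero : (φ (∑ i, e (σ i) * ((1 : L) ⊗ₜ[F] g) * e i)).det
        * ((φ ((1 : L) ⊗ₜ[F] g)).det)⁻¹ = 0) :
    (∀ τ : Equiv.Perm (Fin n), τ ≠ 1 →
      (φ (∑ i, e (τ i) * ((1 : L) ⊗ₜ[F] g) * e i)).det
        * ((φ ((1 : L) ⊗ₜ[F] g)).det)⁻¹ = 0) ∧
    (φ (∑ i, e i * ((1 : L) ⊗ₜ[F] g) * e i)).det * ((φ ((1 : L) ⊗ₜ[F] g)).det)⁻¹ = 1 ∧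
    (∀ τ : Equiv.Perm (Fin n),
      (φ (∑ i, e (τ i) * ((1 : L) ⊗ₜ[F] g) * e i)).det * ((φ ((1 : L) ⊗ₜ[F] g)).det)⁻¹
        = (φ (∑ i, e (τ i) * (1 : L ⊗[F] B) * e i)).det
            * ((φ (1 : L ⊗[F] B)).det)⁻¹) :=
  canonical_generators_trivial_of_two_transitive_general e φ he η hequiv h2trans g hg σ hσfix hzero
end

section
/- Let q_T be a rational binary quadratic form of discriminant 1 corresponding to a rational maximal torus T ≤ PGL₂. Then for every δ ∈ GL₂(ℂ), (det δ)⁻¹·⟨q_T, δ·q_T⟩_disc = Ψ^T_{+1}(δ) − Ψ^T_{−1}(δ), where ⟨·,·⟩_disc is the polarization of the discriminant form and Ψ^T_{±1} are the two canonical generators of the double quotient T\\PGL₂/T. -/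
/-- A binary quadratic form `a x² + b x y + c y²` encoded as the triple `(a, b, c)`. -/
abbrev BQF := ℂ × ℂ × ℂ

/-- The discriminant inner product: the polarization of the discriminant form,
`⟨ax²+bxy+cy², a'x²+b'xy+c'y²⟩ = bb' − 2ac' − 2a'c`. -/
def discPair (q q' : BQF) : ℂ :=
  q.2.1 * q'.2.1 - 2 * q.1 * q'.2.2 - 2 * q'.1 * q.2.2

/-- The (unnormalized) substitution action: `(substBQF M q)(x,y) = q((x,y)·M)`. -/
def substBQF (M : Matrix (Fin 2) (Fin 2) ℂ) (q : BQF) : BQF :=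
  (q.1 * M 0 0 ^ 2 + q.2.1 * M 0 0 * M 0 1 + q.2.2 * M 0 1 ^ 2,
   2 * q.1 * M 0 0 * M 1 0 + q.2.1 * (M 0 0 * M 1 1 + M 0 1 * M 1 0)
     + 2 * q.2.2 * M 0 1 * M 1 1,
   q.1 * M 1 0 ^ 2 + q.2.1 * M 1 0 * M 1 1 + q.2.2 * M 1 1 ^ 2)

/-- The `PGL₂`-action on binary quadratic forms: `g·q(x,y) = (det g)⁻¹ q((x,y)·g)`. -/
noncomputable def actBQF (M : Matrix (Fin 2) (Fin 2) ℂ) (q : BQF) : BQF :=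
  (M.det)⁻¹ • substBQF M q

/-- The canonical generator `Ψ_{+1}` of the double quotient `PA\PGL₂/PA`. -/
noncomputable def PsiPlus (M : Matrix (Fin 2) (Fin 2) ℂ) : ℂ := M 0 0 * M 1 1 / M.det

/-- The canonical generator `Ψ_{−1}` of the double quotient `PA\PGL₂/PA`. -/
noncomputable def PsiMinus (M : Matrix (Fin 2) (Fin 2) ℂ) : ℂ := -(M 0 1 * M 1 0) / M.det

/-- The form `q₀(x,y) = xy` of discriminant `1` corresponding to the diagonal torus. -/
def q0 : BQF := (0, 1, 0)

/-!
The discriminant pairing is `PGL₂`-invariant: substituting by `M` scales it by `(det M)²`,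
which the normalization `(det g)⁻¹` of the action cancels, and the sign of `q_T` enters squared.
Hence `⟨g·q₀, δ·g·q₀⟩ = ⟨q₀, (g⁻¹δg)·q₀⟩`, reducing the claim to the diagonal torus, where
`⟨xy, M·xy⟩_disc = M₀₀M₁₁ + M₀₁M₁₀` is `det M · (Ψ₊₁(M) − Ψ₋₁(M))` on sight.
-/

lemma substBQF_smul (M : Matrix (Fin 2) (Fin 2) ℂ) (t : ℂ) (q : BQF) :
    substBQF M (t • q) = t • substBQF M q := by
  simp only [substBQF, Prod.smul_def, smul_eq_mul, Prod.mk.injEq]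
  refine ⟨by ring, by ring, by ring⟩

lemma substBQF_mul (A B : Matrix (Fin 2) (Fin 2) ℂ) (q : BQF) :
    substBQF (A * B) q = substBQF A (substBQF B q) := by
  simp only [substBQF, Matrix.mul_apply, Fin.sum_univ_two, Prod.mk.injEq]
  refine ⟨by ring, by ring, by ring⟩

lemma discPair_smul_smul (t u : ℂ) (q q' : BQF) :
    discPair (t • q) (u • q') = t * u * discPair q q' := by
  simp only [discPair, Prod.smul_def, smul_eq_mul]
  ring

lemma discPair_substBQF_substBQF (M : Matrix (Fin 2) (Fin 2) ℂ) (q q' : BQF) :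
    discPair (substBQF M q) (substBQF M q') = M.det ^ 2 * discPair q q' := by
  simp only [discPair, substBQF, Matrix.det_fin_two]
  ring

lemma discPair_actBQF_substBQF {g : Matrix (Fin 2) (Fin 2) ℂ} (hg : g.det ≠ 0)
    (δ : Matrix (Fin 2) (Fin 2) ℂ) (q : BQF) :
    discPair (actBQF g q) (substBQF δ (actBQF g q)) = discPair q (substBQF (g⁻¹ * δ * g) q) := by
  have hconj : δ * g = g * (g⁻¹ * δ * g) := by
    rw [← Matrix.mul_assoc, ← Matrix.mul_assoc, Matrix.mul_nonsing_inv g hg.isUnit,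
      Matrix.one_mul]
  rw [actBQF, substBQF_smul, ← substBQF_mul, hconj, substBQF_mul, discPair_smul_smul,
    discPair_substBQF_substBQF]
  field_simp

lemma PsiPlus_sub_PsiMinus (M : Matrix (Fin 2) (Fin 2) ℂ) :
    PsiPlus M - PsiMinus M = (M.det)⁻¹ * discPair q0 (substBQF M q0) := by
  simp only [PsiPlus, PsiMinus, discPair, substBQF, q0]
  ring

theorem discPair_eq_PsiPlus_sub_PsiMinus_general (g δ : Matrix (Fin 2) (Fin 2) ℂ)
    (hgdet : g.det ≠ 0) (qT : BQF)
    (hqT : qT = actBQF g q0 ∨ qT = (-1 : ℂ) • actBQF g q0) :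
    (δ.det)⁻¹ * discPair qT (substBQF δ qT)
      = PsiPlus (g⁻¹ * δ * g) - PsiMinus (g⁻¹ * δ * g) := by
  have hpair : discPair qT (substBQF δ qT) = discPair q0 (substBQF (g⁻¹ * δ * g) q0) := by
    rcases hqT with rfl | rfl
    · exact discPair_actBQF_substBQF hgdet δ q0
    · rw [substBQF_smul, discPair_smul_smul, discPair_actBQF_substBQF hgdet]
      ring
  rw [hpair, PsiPlus_sub_PsiMinus, Matrix.det_conj' ((Matrix.isUnit_iff_isUnit_det g).mpr
    hgdet.isUnit)]

/-- Let `T = g·PA·g⁻¹` be a maximal torus of `PGL₂` and `q_T = ±g·q₀` the binary quadratic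
form of discriminant `1` corresponding to `T`.  Then for every `δ ∈ GL₂(ℂ)`,
`(det δ)⁻¹·⟨q_T, δ.q_T⟩_disc = Ψ^T_{+1}(δ) − Ψ^T_{−1}(δ)`, where
`Ψ^T_{±1} = Ψ_{±1} ∘ Ad(g⁻¹)`. -/
theorem discPair_eq_PsiPlus_sub_PsiMinus (g δ : Matrix (Fin 2) (Fin 2) ℂ)
    (hgdet : g.det ≠ 0) (hδdet : δ.det ≠ 0) (qT : BQF)
    (hqT : qT = actBQF g q0 ∨ qT = (-1 : ℂ) • actBQF g q0) :
    (δ.det)⁻¹ * discPair qT (substBQF δ qT)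
      = PsiPlus (g⁻¹ * δ * g) - PsiMinus (g⁻¹ * δ * g) :=
  discPair_eq_PsiPlus_sub_PsiMinus_general g δ hgdet qT hqT
end

section
/- For the diagonal torus PA in PGL₂, the canonical generators satisfy Ψ_{+1} + Ψ_{−1} = 1 on all of PGL₂, where Ψ_{+1}([[a,b],[c,d]]) = ad/(ad−bc) and Ψ_{−1}([[a,b],[c,d]]) = −bc/(ad−bc); consequently, the ring of regular functions on PGL₂ invariant under both the left and right PA-action is the polynomial ring generated by Ψ_{+1} alone. -/
/-!
Scaling the columns of `A = [[a, b], [c, d]]` by `(d, c)` and its second row by `(cd)⁻¹` is a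
bi-torus move that preserves the determinant and produces `[[ad, bc], [1, 1]]`; so an invariant
`P` satisfies `P(A) = P([[ad, bc], [1, 1]])` wherever `cd ≠ 0`, hence everywhere by Zariski
density. Scaling the first row of that matrix by `det⁻¹` gives `[[Ψ₊, Ψ₊ - 1], [1, 1]]`, of
determinant `1`, so `P / detᵏ = Q(Ψ₊)` with `Q(t) = P([[t, t - 1], [1, 1]])`. These matrices
also show that `Ψ₊` takes every value, so no nonzero `Q` vanishes on it.
-/

open MvPolynomial

theorem MvPolynomial.eq_of_eval_eq_of_eval_ne_zero {R σ : Type*} [CommRing R] [IsDomain R]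
    [Infinite R] {p q d : MvPolynomial σ R} (hd : d ≠ 0)
    (h : ∀ x, eval x d ≠ 0 → eval x p = eval x q) : p = q := by
  have hdpq : d * (p - q) = 0 := MvPolynomial.funext fun x => by
    by_cases hx : eval x d = 0
    · simp [hx]
    · simp [h x hx]
  exact sub_eq_zero.mp ((mul_eq_zero.mp hdpq).resolve_left hd)

theorem MvPolynomial.eval_bind₁ {R σ τ : Type*} [CommSemiring R] (x : τ → R)
    (g : σ → MvPolynomial τ R) (P : MvPolynomial σ R) :
    eval x (bind₁ g P) = eval (fun i => eval x (g i)) P :=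
  eval₂Hom_bind₁ _ _ _ _

theorem Polynomial.eval_mvPolynomial_aeval {R σ : Type*} [CommSemiring R] (x : R)
    (g : σ → Polynomial R) (P : MvPolynomial σ R) :
    (MvPolynomial.aeval g P).eval x = MvPolynomial.eval (fun i => (g i).eval x) P := by
  simpa [Polynomial.coe_aeval_eq_eval, MvPolynomial.coe_aeval_eq_eval] using
    MvPolynomial.comp_aeval_apply (f := g) (Polynomial.aeval x) P

namespace PGL2

section Matrices

variable {R : Type*} [CommRing R]

def reducedMatrix (A : Matrix (Fin 2) (Fin 2) R) : Matrix (Fin 2) (Fin 2) R :=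
  !![A 0 0 * A 1 1, A 0 1 * A 1 0; 1, 1]

def psiMatrix (t : R) : Matrix (Fin 2) (Fin 2) R :=
  !![t, t - 1; 1, 1]

theorem det_reducedMatrix (A : Matrix (Fin 2) (Fin 2) R) : (reducedMatrix A).det = A.det := by
  simp [reducedMatrix, Matrix.det_fin_two]

theorem det_psiMatrix (t : R) : (psiMatrix t).det = 1 := by
  simp [psiMatrix, Matrix.det_fin_two]

theorem eval_reducedMatrix_mvPolynomialX (A : Matrix (Fin 2) (Fin 2) R) (i j : Fin 2) :
    eval (fun q : Fin 2 × Fin 2 => A q.1 q.2)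
      (reducedMatrix (Matrix.mvPolynomialX (Fin 2) (Fin 2) R) i j) = reducedMatrix A i j := by
  fin_cases i <;> fin_cases j <;> simp [reducedMatrix]

end Matrices

variable {F : Type*} [Field F]

def IsBiTorusInvariant (k : ℕ) (P : MvPolynomial (Fin 2 × Fin 2) F) : Prop :=
  ∀ A : Matrix (Fin 2) (Fin 2) F, A.det ≠ 0 → ∀ lam mu : Fin 2 → F,
    (∀ i, lam i ≠ 0) → (∀ j, mu j ≠ 0) →
    eval (fun q : Fin 2 × Fin 2 => lam q.1 * A q.1 q.2 * (mu q.2)⁻¹) P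
        / (Matrix.of fun i j : Fin 2 => lam i * A i j * (mu j)⁻¹).det ^ k
      = eval (fun q : Fin 2 × Fin 2 => A q.1 q.2) P / A.det ^ k

namespace IsBiTorusInvariant

variable {k : ℕ} {P : MvPolynomial (Fin 2 × Fin 2) F}

theorem eval_scaled (hP : IsBiTorusInvariant k P) {A : Matrix (Fin 2) (Fin 2) F}
    (hA : A.det ≠ 0) {lam mu : Fin 2 → F} (hlam : ∀ i, lam i ≠ 0) (hmu : ∀ j, mu j ≠ 0) :
    eval (fun q : Fin 2 × Fin 2 => lam q.1 * A q.1 q.2 * (mu q.2)⁻¹) P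
      = (lam 0 * lam 1 * (mu 0)⁻¹ * (mu 1)⁻¹) ^ k
          * eval (fun q : Fin 2 × Fin 2 => A q.1 q.2) P := by
  have hdet : (Matrix.of fun i j : Fin 2 => lam i * A i j * (mu j)⁻¹).det
      = lam 0 * lam 1 * (mu 0)⁻¹ * (mu 1)⁻¹ * A.det := by
    simp only [Matrix.det_fin_two, Matrix.of_apply]
    ring
  have hscale : lam 0 * lam 1 * (mu 0)⁻¹ * (mu 1)⁻¹ ≠ 0 := by simp [hlam, hmu]
  have h := hP A hA lam mu hlam hmu
  rw [hdet, mul_pow, div_eq_div_iff (mul_ne_zero (pow_ne_zero k hscale) (pow_ne_zero k hA))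
    (pow_ne_zero k hA)] at h
  exact mul_right_cancel₀ (pow_ne_zero k hA) (by rw [h]; ring)

theorem eval_reducedMatrix_of_ne_zero (hP : IsBiTorusInvariant k P)
    {A : Matrix (Fin 2) (Fin 2) F} (hA : A.det ≠ 0) (hc : A 1 0 ≠ 0) (hd : A 1 1 ≠ 0) :
    eval (fun q : Fin 2 × Fin 2 => reducedMatrix A q.1 q.2) P
      = eval (fun q : Fin 2 × Fin 2 => A q.1 q.2) P := by
  have h := hP.eval_scaled hA (lam := ![1, (A 1 0 * A 1 1)⁻¹]) (mu := ![(A 1 1)⁻¹, (A 1 0)⁻¹])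
    (by simp [Fin.forall_fin_two, hc, hd]) (by simp [Fin.forall_fin_two, hc, hd])
  have hscaled : (fun q : Fin 2 × Fin 2 =>
      ![1, (A 1 0 * A 1 1)⁻¹] q.1 * A q.1 q.2 * (![(A 1 1)⁻¹, (A 1 0)⁻¹] q.2)⁻¹)
      = fun q => reducedMatrix A q.1 q.2 := by
    funext ⟨i, j⟩
    fin_cases i <;> fin_cases j <;> simp [reducedMatrix] <;> field_simp
  have hfactor : ![1, (A 1 0 * A 1 1)⁻¹] 0 * ![1, (A 1 0 * A 1 1)⁻¹] 1
      * (![(A 1 1)⁻¹, (A 1 0)⁻¹] 0)⁻¹ * (![(A 1 1)⁻¹, (A 1 0)⁻¹] 1)⁻¹ = 1 := by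
    simp only [Matrix.cons_val_zero, Matrix.cons_val_one, Matrix.cons_val_fin_one, one_mul,
      inv_inv]
    field_simp
  rwa [hscaled, hfactor, one_pow, one_mul] at h

theorem eval_reducedMatrix [Infinite F] (hP : IsBiTorusInvariant k P)
    (A : Matrix (Fin 2) (Fin 2) F) :
    eval (fun q : Fin 2 × Fin 2 => reducedMatrix A q.1 q.2) P
      = eval (fun q : Fin 2 × Fin 2 => A q.1 q.2) P := by
  set G := Matrix.mvPolynomialX (Fin 2) (Fin 2) F
  have hP' : bind₁ (fun q : Fin 2 × Fin 2 => reducedMatrix G q.1 q.2) P = P := by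
    refine eq_of_eval_eq_of_eval_ne_zero (d := G.det * G 1 0 * G 1 1)
      (mul_ne_zero (mul_ne_zero (Matrix.det_mvPolynomialX_ne_zero _ _) (X_ne_zero _))
        (X_ne_zero _)) fun v hv => ?_
    obtain ⟨B, rfl⟩ : ∃ B : Matrix (Fin 2) (Fin 2) F, (fun q : Fin 2 × Fin 2 => B q.1 q.2) = v :=
      ⟨Matrix.of fun i j => v (i, j), rfl⟩
    rw [map_mul, map_mul, Matrix.eval_det_mvPolynomialX] at hv
    simp only [G, Matrix.mvPolynomialX_apply, eval_X, mul_ne_zero_iff] at hv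
    rw [eval_bind₁]
    simp only [G, eval_reducedMatrix_mvPolynomialX]
    exact hP.eval_reducedMatrix_of_ne_zero hv.1.1 hv.1.2 hv.2
  conv_rhs => rw [← hP', eval_bind₁]
  simp only [G, eval_reducedMatrix_mvPolynomialX]

theorem exists_polynomial [Infinite F] (hP : IsBiTorusInvariant k P) :
    ∃ Q : Polynomial F, ∀ A : Matrix (Fin 2) (Fin 2) F, A.det ≠ 0 →
      eval (fun q : Fin 2 × Fin 2 => A q.1 q.2) P / A.det ^ k
        = Q.eval (A 0 0 * A 1 1 / A.det) := by
  refine ⟨aeval (fun q => psiMatrix (Polynomial.X : Polynomial F) q.1 q.2) P, fun A hA => ?_⟩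
  have h := hP.eval_scaled (A := reducedMatrix A) (by rwa [det_reducedMatrix])
    (lam := ![A.det⁻¹, 1]) (mu := 1) (by simp [Fin.forall_fin_two, hA]) (by simp)
  have hscaled : (fun q : Fin 2 × Fin 2 =>
      ![A.det⁻¹, 1] q.1 * reducedMatrix A q.1 q.2 * ((1 : Fin 2 → F) q.2)⁻¹)
      = fun q => psiMatrix (A 0 0 * A 1 1 / A.det) q.1 q.2 := by
    have hbc : A 0 1 * A 1 0 = A 0 0 * A 1 1 - A.det := by rw [Matrix.det_fin_two]; ring
    funext ⟨i, j⟩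
    fin_cases i <;> fin_cases j <;> simp [reducedMatrix, psiMatrix, hbc] <;> field_simp
  have hpsi : (fun q : Fin 2 × Fin 2 => (psiMatrix (Polynomial.X : Polynomial F) q.1 q.2).eval
      (A 0 0 * A 1 1 / A.det)) = fun q => psiMatrix (A 0 0 * A 1 1 / A.det) q.1 q.2 := by
    funext ⟨i, j⟩
    fin_cases i <;> fin_cases j <;> simp [psiMatrix]
  rw [hscaled, hP.eval_reducedMatrix] at h
  rw [Polynomial.eval_mvPolynomial_aeval, hpsi, h]
  simp [div_eq_inv_mul]

end IsBiTorusInvariant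

end PGL2

/-- For the diagonal torus `PA` in `PGL₂`, the canonical generators
`Ψ_{+1}(A) = a d/(a d − b c)` and `Ψ_{−1}(A) = −b c/(a d − b c)` satisfy
`Ψ_{+1} + Ψ_{−1} = 1`; consequently, every regular function on `PGL₂`
(a degree-`0` element `P/detᵏ` with `P` homogeneous of degree `2k`) which is invariant
under both the left and the right `PA`-action is a polynomial in `Ψ_{+1}` alone, and
`Ψ_{+1}` satisfies no polynomial relation: the invariant ring is the polynomial ring
generated by `Ψ_{+1}`. -/
theorem pgl2_invariants_eq_polynomials_in_PsiPlus {F : Type*} [Field F] [CharZero F] :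
    (∀ A : Matrix (Fin 2) (Fin 2) F, A.det ≠ 0 →
      A 0 0 * A 1 1 / A.det + -(A 0 1 * A 1 0) / A.det = 1) ∧
    (∀ (k : ℕ) (P : MvPolynomial (Fin 2 × Fin 2) F), P.IsHomogeneous (2 * k) →
      (∀ A : Matrix (Fin 2) (Fin 2) F, A.det ≠ 0 → ∀ lam mu : Fin 2 → F,
        (∀ i, lam i ≠ 0) → (∀ j, mu j ≠ 0) →
        eval (fun q : Fin 2 × Fin 2 => lam q.1 * A q.1 q.2 * (mu q.2)⁻¹) P
            / (Matrix.of fun i j : Fin 2 => lam i * A i j * (mu j)⁻¹).det ^ k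
          = eval (fun q : Fin 2 × Fin 2 => A q.1 q.2) P / A.det ^ k) →
      ∃ Q : Polynomial F, ∀ A : Matrix (Fin 2) (Fin 2) F, A.det ≠ 0 →
        eval (fun q : Fin 2 × Fin 2 => A q.1 q.2) P / A.det ^ k
          = Q.eval (A 0 0 * A 1 1 / A.det)) ∧
    (∀ Q : Polynomial F,
      (∀ A : Matrix (Fin 2) (Fin 2) F, A.det ≠ 0 → Q.eval (A 0 0 * A 1 1 / A.det) = 0) →
      Q = 0) := by
  refine ⟨fun A hA => ?_, fun k P _ hP => PGL2.IsBiTorusInvariant.exists_polynomial hP,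
    fun Q hQ => Polynomial.funext fun t => ?_⟩
  · rw [← add_div, div_eq_one_iff_eq hA, Matrix.det_fin_two]
    ring
  · simpa [PGL2.psiMatrix, PGL2.det_psiMatrix] using
      hQ (PGL2.psiMatrix t) (by simp [PGL2.det_psiMatrix])
end
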